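/- For the block matrices F = [[0, F12, F13],[0,0,0],[0,0,0]] and V as in the networked SEAIR model, the spectral radius of F V^{-1} equals the spectral radius of F12 V22^{-1} V21 V11^{-1} + F13 V33^{-1} V31 V11^{-1}. -/

import Mathlib

open Matrix

/-- Spectral radius of a real square matrix. -/
noncomputable def specRad {m : Type*} [Fintype m] [DecidableEq m]
    (A : Matrix m m ℝ) : ℝ :=
  sSup ((fun z : ℂ => ‖z‖) '' spectrum ℂ (A.map (Complex.ofReal)))

/-- Assemble a 3×3 block matrix from nine `n × n` blocks. -/
def block3 {n : Type*} (A11 A12 A13 A21 A22 A23 A31 A32 A33 : Matrix n n ℝ) :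
    Matrix (Fin 3 × n) (Fin 3 × n) ℝ :=
  fun p q => ![![A11, A12, A13], ![A21, A22, A23], ![A31, A32, A33]] p.1 q.1 p.2 q.2

section Aux

set_option linter.unusedSectionVars false

variable {n : Type*} [Fintype n] [DecidableEq n]

lemma block3_mul (A11 A12 A13 A21 A22 A23 A31 A32 A33
    B11 B12 B13 B21 B22 B23 B31 B32 B33 : Matrix n n ℝ) :
    block3 A11 A12 A13 A21 A22 A23 A31 A32 A33 *
      block3 B11 B12 B13 B21 B22 B23 B31 B32 B33 =
    block3 (A11*B11+A12*B21+A13*B31) (A11*B12+A12*B22+A13*B32) (A11*B13+A12*B23+A13*B33)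
      (A21*B11+A22*B21+A23*B31) (A21*B12+A22*B22+A23*B32) (A21*B13+A22*B23+A23*B33)
      (A31*B11+A32*B21+A33*B31) (A31*B12+A32*B22+A33*B32) (A31*B13+A32*B23+A33*B33) := by
  ext ⟨i, a⟩ ⟨j, b⟩
  fin_cases i <;> fin_cases j <;>
    simp only [block3, Matrix.mul_apply, Matrix.add_apply, Fintype.sum_prod_type, Fin.sum_univ_three] <;> rfl

lemma block3_one : block3 (n := n) 1 0 0 0 1 0 0 0 1 = 1 := by
  ext ⟨i, a⟩ ⟨j, b⟩
  fin_cases i <;> fin_cases j <;>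
    simp only [block3, Matrix.one_apply, Fin.reduceFinMk, Fin.isValue, Matrix.cons_val_zero, Matrix.cons_val_one,
      Matrix.cons_val_two, Matrix.head_cons, Matrix.tail_cons, Prod.mk.injEq, Fin.reduceEq, false_and,
      true_and, if_true, if_false, Matrix.zero_apply]

/-- Complex block matrix with only the first block row nonzero. -/
def topBlock {n : Type*} (M B C : Matrix n n ℂ) : Matrix (Fin 3 × n) (Fin 3 × n) ℂ :=
  fun p q => if p.1 = 0 then ![M, B, C] q.1 p.2 q.2 else 0

lemma map_block3_top (M B C : Matrix n n ℝ) :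
    (block3 M B C 0 0 0 0 0 0).map Complex.ofReal =
      topBlock (M.map Complex.ofReal) (B.map Complex.ofReal) (C.map Complex.ofReal) := by
  ext ⟨i, a⟩ ⟨j, b⟩
  fin_cases i <;> fin_cases j <;>
    simp only [block3, topBlock, Matrix.map_apply, Complex.ofReal_zero, Fin.reduceFinMk, Fin.isValue, Matrix.cons_val_zero, Matrix.cons_val_one,
      Matrix.cons_val_two, Matrix.head_cons, Matrix.tail_cons, Prod.mk.injEq, Fin.reduceEq, false_and,
      true_and, if_true, if_false, Matrix.zero_apply]

lemma mem_spec_iff {m : Type*} [Fintype m] [DecidableEq m] (A : Matrix m m ℂ) (μ : ℂ) :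
    μ ∈ spectrum ℂ A ↔ ∃ v, v ≠ 0 ∧ A *ᵥ v = μ • v := by
  rw [spectrum.mem_iff, Matrix.isUnit_iff_isUnit_det, isUnit_iff_ne_zero, not_not,
    ← Matrix.exists_mulVec_eq_zero_iff]
  have key : ∀ v : m → ℂ, (algebraMap ℂ (Matrix m m ℂ) μ) *ᵥ v = μ • v := by
    intro v; ext i; simp [Matrix.algebraMap_eq_diagonal, Matrix.mulVec_diagonal]
  constructor
  · rintro ⟨v, hv, h⟩
    refine ⟨v, hv, ?_⟩
    rw [Matrix.sub_mulVec, key, sub_eq_zero] at h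
    exact h.symm
  · rintro ⟨v, hv, h⟩
    refine ⟨v, hv, ?_⟩
    rw [Matrix.sub_mulVec, h, key, sub_self]

lemma spec_nonempty {m : Type*} [Fintype m] [DecidableEq m] [Nonempty m]
    (A : Matrix m m ℂ) : (spectrum ℂ A).Nonempty := by
  rw [← AlgEquiv.spectrum_eq (Matrix.toLinAlgEquiv (Pi.basisFun ℂ m))]
  obtain ⟨μ, hμ⟩ := Module.End.exists_eigenvalue ((Matrix.toLinAlgEquiv (Pi.basisFun ℂ m)) A)
  exact ⟨μ, Module.End.hasEigenvalue_iff_mem_spectrum.mp hμ⟩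

lemma spec_empty {m : Type*} [Fintype m] [DecidableEq m] [IsEmpty m]
    (A : Matrix m m ℂ) : spectrum ℂ A = ∅ := by
  ext μ; simp [spectrum.mem_iff, isUnit_of_subsingleton]

lemma topBlock_mulVec (M B C : Matrix n n ℂ) (w : Fin 3 × n → ℂ) :
    topBlock M B C *ᵥ w = fun p => if p.1 = 0 then
      (M *ᵥ fun a => w (0, a)) p.2 + (B *ᵥ fun a => w (1, a)) p.2 +
        (C *ᵥ fun a => w (2, a)) p.2 else 0 := by
  ext ⟨i, b⟩
  fin_cases i <;>
    simp only [topBlock, Matrix.mulVec, dotProduct, Fintype.sum_prod_type, Fin.sum_univ_three,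
      zero_mul, Finset.sum_const_zero, add_zero, Fin.reduceFinMk, Fin.isValue, Matrix.cons_val_zero, Matrix.cons_val_one,
      Matrix.cons_val_two, Matrix.head_cons, Matrix.tail_cons, Prod.mk.injEq, Fin.reduceEq, false_and,
      true_and, if_true, if_false, Matrix.zero_apply]

lemma topBlock_spectrum [Nonempty n] (M B C : Matrix n n ℂ) :
    spectrum ℂ (topBlock M B C) = spectrum ℂ M ∪ {0} := by
  apply Set.Subset.antisymm
  · intro μ hμ
    rcases eq_or_ne μ 0 with rfl | hne
    · exact Or.inr rfl
    refine Or.inl ?_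
    obtain ⟨w, hw, hAw⟩ := (mem_spec_iff _ _).mp hμ
    rw [topBlock_mulVec] at hAw
    have h1 : ∀ a : n, w (1, a) = 0 := by
      intro a
      have := congrFun hAw (1, a)
      simp at this
      exact this.resolve_left hne
    have h2 : ∀ a : n, w (2, a) = 0 := by
      intro a
      have := congrFun hAw (2, a)
      simp at this
      exact this.resolve_left hne
    refine (mem_spec_iff _ _).mpr ⟨fun a => w (0, a), ?_, ?_⟩
    · intro hv0
      apply hw
      funext p
      obtain ⟨i, a⟩ := p
      fin_cases i
      · exact congrFun hv0 a
      · exact h1 a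
      · exact h2 a
    · ext b
      have := congrFun hAw (0, b)
      simp only [Pi.smul_apply, smul_eq_mul] at this ⊢
      have e1 : (fun a => w (1, a)) = (0 : n → ℂ) := funext h1
      have e2 : (fun a => w (2, a)) = (0 : n → ℂ) := funext h2
      rw [e1, e2, Matrix.mulVec_zero] at this
      simpa using this
  · rintro μ hμ
    rcases hμ with hμ | hμ
    · obtain ⟨v, hv, hMv⟩ := (mem_spec_iff _ _).mp hμ
      refine (mem_spec_iff _ _).mpr
        ⟨fun p => if p.1 = 0 then v p.2 else 0, ?_, ?_⟩
      · obtain ⟨a, ha⟩ := Function.ne_iff.mp hv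
        intro h0
        exact ha (by simpa using congrFun h0 ((0 : Fin 3), a))
      · rw [topBlock_mulVec]
        funext p
        obtain ⟨i, b⟩ := p
        fin_cases i <;>
          simp [hMv, show ((1 : Fin 3) ≠ 0) from by decide,
            show ((2 : Fin 3) ≠ 0) from by decide,
            show (fun _ : n => (0 : ℂ)) = 0 from rfl]
    · -- μ = 0
      rw [Set.mem_singleton_iff] at hμ
      subst hμ
      rw [spectrum.zero_mem_iff, Matrix.isUnit_iff_isUnit_det, isUnit_iff_ne_zero, not_not]
      apply Matrix.det_eq_zero_of_row_eq_zero ((1 : Fin 3), Classical.arbitrary n)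
      intro q
      simp [topBlock]

end Aux

/-- For the networked SEAIR next-generation computation, the spectral radius of
`F V⁻¹` equals that of `F12 V22⁻¹ V21 V11⁻¹ + F13 V33⁻¹ V31 V11⁻¹`. -/
theorem networked_spectral_radius_reduction {n : Type*} [Fintype n] [DecidableEq n]
    (F12 F13 V21 V31 V11 V22 V33 : Matrix n n ℝ)
    (h11 : IsUnit V11) (h22 : IsUnit V22) (h33 : IsUnit V33) :
    specRad (block3 0 F12 F13 0 0 0 0 0 0 *
        (block3 V11 0 0 (-V21) V22 0 (-V31) 0 V33)⁻¹) =
      specRad (F12 * V22⁻¹ * V21 * V11⁻¹ + F13 * V33⁻¹ * V31 * V11⁻¹) := by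
  have e1 : V11 * V11⁻¹ = 1 := Matrix.mul_nonsing_inv _ ((Matrix.isUnit_iff_isUnit_det _).mp h11)
  have e2 : V22 * V22⁻¹ = 1 := Matrix.mul_nonsing_inv _ ((Matrix.isUnit_iff_isUnit_det _).mp h22)
  have e3 : V33 * V33⁻¹ = 1 := Matrix.mul_nonsing_inv _ ((Matrix.isUnit_iff_isUnit_det _).mp h33)
  have h21 : V22 * (V22⁻¹ * V21 * V11⁻¹) = V21 * V11⁻¹ := by
    rw [← Matrix.mul_assoc, ← Matrix.mul_assoc, e2, Matrix.one_mul]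
  have h31 : V33 * (V33⁻¹ * V31 * V11⁻¹) = V31 * V11⁻¹ := by
    rw [← Matrix.mul_assoc, ← Matrix.mul_assoc, e3, Matrix.one_mul]
  have hV : (block3 V11 0 0 (-V21) V22 0 (-V31) 0 V33)⁻¹ =
      block3 V11⁻¹ 0 0 (V22⁻¹*V21*V11⁻¹) V22⁻¹ 0 (V33⁻¹*V31*V11⁻¹) 0 V33⁻¹ := by
    apply Matrix.inv_eq_right_inv
    rw [block3_mul, ← block3_one]
    simp only [Matrix.mul_zero, Matrix.zero_mul, add_zero, zero_add, Matrix.neg_mul,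
      h21, h31, neg_add_cancel, e1, e2, e3]
  have hFV : block3 0 F12 F13 0 0 0 0 0 0 *
      (block3 V11 0 0 (-V21) V22 0 (-V31) 0 V33)⁻¹ =
      block3 (F12 * V22⁻¹ * V21 * V11⁻¹ + F13 * V33⁻¹ * V31 * V11⁻¹)
        (F12 * V22⁻¹) (F13 * V33⁻¹) 0 0 0 0 0 0 := by
    rw [hV, block3_mul]
    simp only [Matrix.zero_mul, Matrix.mul_zero, add_zero, zero_add, Matrix.mul_assoc]
  rw [hFV]
  set M0 := F12 * V22⁻¹ * V21 * V11⁻¹ + F13 * V33⁻¹ * V31 * V11⁻¹ with hM0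
  rcases isEmpty_or_nonempty n with hn | hn
  · unfold specRad
    rw [spec_empty, spec_empty]
  · unfold specRad
    rw [map_block3_top, topBlock_spectrum, Set.image_union, Set.image_singleton, norm_zero]
    set S := (fun z : ℂ => ‖z‖) '' spectrum ℂ (M0.map Complex.ofReal) with hS
    have hSne : S.Nonempty := (spec_nonempty _).image _
    have hSbdd : BddAbove S := ((Matrix.finite_spectrum _).image _).bddAbove
    rw [csSup_union hSbdd hSne bddAbove_singleton (Set.singleton_nonempty 0),
      csSup_singleton]
    refine sup_eq_left.mpr ?_
    obtain ⟨x, hx⟩ := hSne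
    obtain ⟨μ, _, rfl⟩ := hx
    exact le_trans (norm_nonneg μ) (le_csSup hSbdd ⟨μ, ‹_›, rfl⟩)
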